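/- Let Σ be a polynomial control system on ℝ^n and let 1 ≤ l ≤ n. Then the set S_∞^{<l} is an algebraic set; more precisely, for any k with C^{#k} = C^{#k+1}, one has S_∞^{<l} = S_k^{<l}, and S_∞^{<l} = 𝕍(J) where J is the ideal of ℝ[x] generated by the determinants of all l×l submatrices of the matrix whose columns are the elements of 𝒞^k. -/

import Mathlib

open MvPolynomial

/-- Evaluation of a polynomial vector field at a point of `ℝ^n`. -/
noncomputable def pvfEval {n : ℕ} (X : Fin n → MvPolynomial (Fin n) ℝ) (a : Fin n → ℝ) :
    Fin n → ℝ := fun i => eval a (X i)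

/-- Lie bracket of polynomial vector fields:
`[X,Y]_j = ∑ i, (X i * ∂Y_j/∂x_i − Y i * ∂X_j/∂x_i)`. -/
noncomputable def pBracket {n : ℕ} (X Y : Fin n → MvPolynomial (Fin n) ℝ) :
    Fin n → MvPolynomial (Fin n) ℝ :=
  fun j => ∑ i, (X i * pderiv i (Y j) - Y i * pderiv i (X j))

/-- Lie derivative of a polynomial along a polynomial vector field:
`L_X p = ∑ i, X i * ∂p/∂x_i`. -/
noncomputable def pLieDeriv {n : ℕ} (X : Fin n → MvPolynomial (Fin n) ℝ)
    (p : MvPolynomial (Fin n) ℝ) : MvPolynomial (Fin n) ℝ :=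
  ∑ i, X i * pderiv i p

/-- An ideal `I` is invariant under `L_X` if `L_X p ∈ I` for every `p ∈ I`. -/
def IdealInvariant {n : ℕ} (X : Fin n → MvPolynomial (Fin n) ℝ)
    (I : Ideal (MvPolynomial (Fin n) ℝ)) : Prop :=
  ∀ p ∈ I, pLieDeriv X p ∈ I

/-- The algebraic set `𝕍(J)` of an ideal `J`. -/
def zeroSet {n : ℕ} (J : Ideal (MvPolynomial (Fin n) ℝ)) : Set (Fin n → ℝ) :=
  {a | ∀ p ∈ J, eval a p = 0}

/-- The vanishing ideal `𝕀(A)` of a set `A ⊆ ℝ^n`. -/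
noncomputable def zeroIdeal {n : ℕ} (A : Set (Fin n → ℝ)) :
    Ideal (MvPolynomial (Fin n) ℝ) where
  carrier := {p | ∀ a ∈ A, eval a p = 0}
  add_mem' := fun hp hq a ha => by simp [hp a ha, hq a ha]
  zero_mem' := fun a ha => by simp
  smul_mem' := fun c p hp a ha => by simp [smul_eq_mul, hp a ha]

/-- The family `𝒞^k` of Lie brackets of depth at most `k` of the system vector fields
`f, g_1, …, g_m`: `𝒞^0 = {f, g_1, …, g_m}` and
`𝒞^{k+1} = 𝒞^k ∪ {[X,h] : X ∈ {f, g_1, …, g_m}, h ∈ 𝒞^k}`. -/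
def accFam {n m : ℕ} (f : Fin n → MvPolynomial (Fin n) ℝ)
    (g : Fin m → Fin n → MvPolynomial (Fin n) ℝ) :
    ℕ → Set (Fin n → MvPolynomial (Fin n) ℝ)
  | 0 => insert f (Set.range g)
  | k + 1 => accFam f g k ∪
      {h | ∃ X ∈ insert f (Set.range g), ∃ h' ∈ accFam f g k, h = pBracket X h'}

/-- `C^k(a) = span_ℝ {h(a) : h ∈ 𝒞^k}`. -/
noncomputable def accSpan {n m : ℕ} (f : Fin n → MvPolynomial (Fin n) ℝ)
    (g : Fin m → Fin n → MvPolynomial (Fin n) ℝ) (k : ℕ) (a : Fin n → ℝ) :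
    Submodule ℝ (Fin n → ℝ) :=
  Submodule.span ℝ ((fun h => pvfEval h a) '' accFam f g k)

/-- `C(a) = span_ℝ {h(a) : h ∈ 𝒞}`, where `𝒞 = ⋃ k, 𝒞^k`. -/
noncomputable def accSpanInf {n m : ℕ} (f : Fin n → MvPolynomial (Fin n) ℝ)
    (g : Fin m → Fin n → MvPolynomial (Fin n) ℝ) (a : Fin n → ℝ) :
    Submodule ℝ (Fin n → ℝ) :=
  Submodule.span ℝ ((fun h => pvfEval h a) '' ⋃ k, accFam f g k)

/-- `S_k^{<l} = {a : dim C^k(a) < l}`. -/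
def singularSetLt {n m : ℕ} (f : Fin n → MvPolynomial (Fin n) ℝ)
    (g : Fin m → Fin n → MvPolynomial (Fin n) ℝ) (k l : ℕ) : Set (Fin n → ℝ) :=
  {a | Module.finrank ℝ (accSpan f g k a) < l}

/-- `S_∞^{<l} = {a : dim C(a) < l}`;  `S_∞ = S_∞^{<n}`. -/
def singularSetInfLt {n m : ℕ} (f : Fin n → MvPolynomial (Fin n) ℝ)
    (g : Fin m → Fin n → MvPolynomial (Fin n) ℝ) (l : ℕ) : Set (Fin n → ℝ) :=
  {a | Module.finrank ℝ (accSpanInf f g a) < l}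

/-- The ideal `I_{M_k}^{<l}` generated by the determinants of all `l×l` submatrices of the
matrix whose columns are the elements of `𝒞^k` (choices of `l` columns from `𝒞^k` and
`l` rows). -/
noncomputable def minorIdeal {n m : ℕ} (f : Fin n → MvPolynomial (Fin n) ℝ)
    (g : Fin m → Fin n → MvPolynomial (Fin n) ℝ) (k l : ℕ) :
    Ideal (MvPolynomial (Fin n) ℝ) :=
  Ideal.span {p | ∃ (rows : Fin l → Fin n) (cols : Fin l → (Fin n → MvPolynomial (Fin n) ℝ)),
    (∀ j, cols j ∈ accFam f g k) ∧ p = (Matrix.of fun i j => cols j (rows i)).det}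

/-- The submodule `C^{#k}` of the `ℝ[x]`-module `ℝ[x]^n` generated by `𝒞^k`. -/
noncomputable def accModule {n m : ℕ} (f : Fin n → MvPolynomial (Fin n) ℝ)
    (g : Fin m → Fin n → MvPolynomial (Fin n) ℝ) (k : ℕ) :
    Submodule (MvPolynomial (Fin n) ℝ) (Fin n → MvPolynomial (Fin n) ℝ) :=
  Submodule.span (MvPolynomial (Fin n) ℝ) (accFam f g k)

/-!
Since `[X, p • Y] = p • [X, Y] + (L_X p) • Y`, bracketing with a field of the system maps the
`ℝ[x]`-module `C^{#k}` into `C^{#k+1}`; hence once `C^{#k} = C^{#k+1}` every later `C^{#j}`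
equals `C^{#k}`, and evaluating at `a` gives `C(a) = C^k(a)`. By Noetherianity of `ℝ[x]^n` such a
`k` exists. Finally `dim C^k(a) < l` says that every `l` vectors `h(a)`, `h ∈ 𝒞^k`, are linearly
dependent, i.e. that all `l × l` minors of the matrix with columns `𝒞^k` vanish at `a`.
-/

open Module

section RankCriterion

variable {K : Type*} [Field K]

theorem le_finrank_span_iff_exists_linearIndependent {M : Type*} [AddCommGroup M] [Module K M]
    [FiniteDimensional K M] (V : Set M) (l : ℕ) :
    l ≤ finrank K (Submodule.span K V) ↔
      ∃ v : Fin l → M, (∀ j, v j ∈ V) ∧ LinearIndependent K v := by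
  constructor
  · intro hl
    obtain ⟨t, htV, hspan, hli⟩ := exists_linearIndependent K V
    have : Fintype t := hli.setFinite.fintype
    have hcard : Fintype.card (Fin l) ≤ Fintype.card t := by
      rwa [← hspan, finrank_span_set_eq_card hli, Set.toFinset_card, ← Fintype.card_fin l] at hl
    obtain ⟨e⟩ := Function.Embedding.nonempty_of_card_le hcard
    exact ⟨fun j => e j, fun j => htV (e j).2, hli.comp e e.injective⟩
  · rintro ⟨v, hvV, hli⟩
    calc l = finrank K (Submodule.span K (Set.range v)) := by
          rw [finrank_span_eq_card hli, Fintype.card_fin]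
      _ ≤ finrank K (Submodule.span K V) :=
          Submodule.finrank_mono (Submodule.span_mono (Set.range_subset_iff.mpr hvV))

theorem linearIndependent_iff_exists_det_ne_zero {ι : Type*} [Finite ι] {l : ℕ}
    (v : Fin l → ι → K) :
    LinearIndependent K v ↔ ∃ rows : Fin l → ι, (Matrix.of fun i j => v j (rows i)).det ≠ 0 := by
  constructor
  · intro hv
    -- `A` has rank `l` (its columns are `v`), so `l` of its rows are already independent.
    let A : Matrix ι (Fin l) K := Matrix.of fun i j => v j i
    have hrank : l ≤ finrank K (Submodule.span K (Set.range A.row)) := by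
      rw [← Matrix.rank_eq_finrank_span_row, Matrix.rank_eq_finrank_span_cols]
      exact (finrank_span_eq_card hv).trans (Fintype.card_fin l) |>.ge
    obtain ⟨w, hwA, hw⟩ := (le_finrank_span_iff_exists_linearIndependent _ l).mp hrank
    choose rows hrows using hwA
    refine ⟨rows, ?_⟩
    rw [← isUnit_iff_ne_zero, ← Matrix.isUnit_iff_isUnit_det,
      ← Matrix.linearIndependent_rows_iff_isUnit]
    exact (funext hrows : (Matrix.of fun i j => v j (rows i)).row = w) ▸ hw
  · rintro ⟨rows, hdet⟩
    have hunit := (Matrix.isUnit_iff_isUnit_det _).mpr (isUnit_iff_ne_zero.mpr hdet)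
    exact (Matrix.linearIndependent_cols_iff_isUnit.mpr hunit).of_comp (LinearMap.funLeft K K rows)

theorem finrank_span_lt_iff_forall_det_eq_zero {ι : Type*} [Finite ι] (V : Set (ι → K))
    (l : ℕ) :
    finrank K (Submodule.span K V) < l ↔
      ∀ (rows : Fin l → ι) (v : Fin l → ι → K), (∀ j, v j ∈ V) →
        (Matrix.of fun i j => v j (rows i)).det = 0 := by
  rw [← not_le, le_finrank_span_iff_exists_linearIndependent]
  simp only [linearIndependent_iff_exists_det_ne_zero, not_exists, not_and, not_not]
  exact ⟨fun h rows v hv => h v hv rows, fun h v hv rows => h rows v hv⟩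

end RankCriterion

theorem mem_zeroSet_span_iff {n : ℕ} (S : Set (MvPolynomial (Fin n) ℝ)) (a : Fin n → ℝ) :
    a ∈ zeroSet (Ideal.span S) ↔ ∀ p ∈ S, eval a p = 0 :=
  ⟨fun ha p hp => ha p (Ideal.subset_span hp),
    fun ha _ hp => Ideal.span_le.mpr (fun p hp => RingHom.mem_ker.mpr (ha p hp)) hp⟩

section VectorFields

variable {n : ℕ}

@[simp]
theorem pvfEval_zero (a : Fin n → ℝ) : pvfEval (0 : Fin n → MvPolynomial (Fin n) ℝ) a = 0 := by
  funext i; simp [pvfEval]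

@[simp]
theorem pvfEval_add (X Y : Fin n → MvPolynomial (Fin n) ℝ) (a : Fin n → ℝ) :
    pvfEval (X + Y) a = pvfEval X a + pvfEval Y a := by
  funext i; simp [pvfEval]

@[simp]
theorem pvfEval_smul (p : MvPolynomial (Fin n) ℝ) (X : Fin n → MvPolynomial (Fin n) ℝ)
    (a : Fin n → ℝ) : pvfEval (p • X) a = eval a p • pvfEval X a := by
  funext i; simp [pvfEval]

theorem pvfEval_mem_span_image {F : Set (Fin n → MvPolynomial (Fin n) ℝ)} (a : Fin n → ℝ)
    {h : Fin n → MvPolynomial (Fin n) ℝ} (hh : h ∈ Submodule.span (MvPolynomial (Fin n) ℝ) F) :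
    pvfEval h a ∈ Submodule.span ℝ ((fun h => pvfEval h a) '' F) := by
  induction hh using Submodule.span_induction with
  | mem y hy => exact Submodule.subset_span ⟨y, hy, rfl⟩
  | zero => simp
  | add y z _ _ hy hz => simpa using add_mem hy hz
  | smul p y _ hy => simpa using Submodule.smul_mem _ (eval a p) hy

@[simp]
theorem pBracket_zero_right (X : Fin n → MvPolynomial (Fin n) ℝ) :
    pBracket X (0 : Fin n → MvPolynomial (Fin n) ℝ) = 0 := by
  funext j; simp [pBracket]

theorem pBracket_add_right (X Y Z : Fin n → MvPolynomial (Fin n) ℝ) :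
    pBracket X (Y + Z) = pBracket X Y + pBracket X Z := by
  funext j
  simp only [pBracket, Pi.add_apply, map_add, ← Finset.sum_add_distrib]
  exact Finset.sum_congr rfl fun i _ => by ring

theorem pBracket_smul_right (X Y : Fin n → MvPolynomial (Fin n) ℝ) (p : MvPolynomial (Fin n) ℝ) :
    pBracket X (p • Y) = p • pBracket X Y + pLieDeriv X p • Y := by
  funext j
  simp only [pBracket, pLieDeriv, Pi.add_apply, Pi.smul_apply, smul_eq_mul, pderiv_mul,
    Finset.mul_sum, Finset.sum_mul, ← Finset.sum_add_distrib]
  exact Finset.sum_congr rfl fun i _ => by ring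

end VectorFields

section AccessibilityModules

variable {n m : ℕ} (f : Fin n → MvPolynomial (Fin n) ℝ)
  (g : Fin m → Fin n → MvPolynomial (Fin n) ℝ)

theorem accFam_mono : Monotone (accFam f g) :=
  monotone_nat_of_le_succ fun _ => Set.subset_union_left

theorem accModule_mono : Monotone (accModule f g) :=
  fun _ _ hij => Submodule.span_mono (accFam_mono f g hij)

theorem pBracket_mem_accModule_succ {X : Fin n → MvPolynomial (Fin n) ℝ}
    (hX : X ∈ insert f (Set.range g)) {k : ℕ} {h : Fin n → MvPolynomial (Fin n) ℝ}
    (hh : h ∈ accModule f g k) : pBracket X h ∈ accModule f g (k + 1) := by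
  induction hh using Submodule.span_induction with
  | mem y hy => exact Submodule.subset_span (Or.inr ⟨X, hX, y, hy, rfl⟩)
  | zero => simp
  | add y z _ _ hy hz => simpa [pBracket_add_right] using add_mem hy hz
  | smul p y hy hpy =>
    rw [pBracket_smul_right]
    exact add_mem (Submodule.smul_mem _ _ hpy)
      (Submodule.smul_mem _ _ (accModule_mono f g k.le_succ hy))

theorem accModule_add_eq_of_eq_succ {k : ℕ} (hk : accModule f g k = accModule f g (k + 1))
    (j : ℕ) : accModule f g (k + j) = accModule f g k := by
  induction j with
  | zero => rfl
  | succ j ih =>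
    refine le_antisymm (Submodule.span_le.mpr ?_) (accModule_mono f g (k.le_add_right _))
    rintro h (hh | ⟨X, hX, h', hh', rfl⟩)
    · exact ih ▸ Submodule.subset_span hh
    · rw [hk]
      exact pBracket_mem_accModule_succ f g hX (ih ▸ Submodule.subset_span hh')

theorem accFam_subset_accModule_of_eq_succ {k : ℕ}
    (hk : accModule f g k = accModule f g (k + 1)) (j : ℕ) :
    accFam f g j ⊆ accModule f g k := fun _ hh =>
  accModule_add_eq_of_eq_succ f g hk j ▸
    Submodule.subset_span (accFam_mono f g (j.le_add_left k) hh)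

theorem accSpanInf_eq_accSpan_of_eq_succ {k : ℕ}
    (hk : accModule f g k = accModule f g (k + 1)) (a : Fin n → ℝ) :
    accSpanInf f g a = accSpan f g k a := by
  refine le_antisymm (Submodule.span_le.mpr ?_)
    (Submodule.span_mono (Set.image_mono (Set.subset_iUnion (accFam f g) k)))
  rintro _ ⟨h, hh, rfl⟩
  obtain ⟨j, hj⟩ := Set.mem_iUnion.mp hh
  exact pvfEval_mem_span_image a (accFam_subset_accModule_of_eq_succ f g hk j hj)

theorem exists_accModule_eq_succ : ∃ k, accModule f g k = accModule f g (k + 1) := by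
  obtain ⟨k, hk⟩ := monotone_stabilizes_iff_noetherian.mpr inferInstance
    ⟨accModule f g, accModule_mono f g⟩
  exact ⟨k, hk (k + 1) k.le_succ⟩

theorem singularSetInfLt_eq_singularSetLt_of_eq_succ {k : ℕ}
    (hk : accModule f g k = accModule f g (k + 1)) (l : ℕ) :
    singularSetInfLt f g l = singularSetLt f g k l := by
  ext a
  change finrank ℝ (accSpanInf f g a) < l ↔ finrank ℝ (accSpan f g k a) < l
  rw [accSpanInf_eq_accSpan_of_eq_succ f g hk a]

theorem singularSetLt_eq_zeroSet_minorIdeal (k l : ℕ) :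
    singularSetLt f g k l = zeroSet (minorIdeal f g k l) := by
  ext a
  have eval_det (rows : Fin l → Fin n) (cols : Fin l → Fin n → MvPolynomial (Fin n) ℝ) :
      eval a (Matrix.of fun i j => cols j (rows i)).det =
        (Matrix.of fun i j => pvfEval (cols j) a (rows i)).det :=
    RingHom.map_det _ _
  rw [minorIdeal, mem_zeroSet_span_iff, singularSetLt, Set.mem_ofPred_eq, accSpan,
    finrank_span_lt_iff_forall_det_eq_zero]
  constructor
  · rintro hall _ ⟨rows, cols, hcols, rfl⟩
    rw [eval_det]
    exact hall rows _ fun j => ⟨cols j, hcols j, rfl⟩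
  · intro hvanish rows v hv
    choose cols hcols hcols_eval using hv
    simpa only [eval_det, hcols_eval] using hvanish _ ⟨rows, cols, hcols, rfl⟩

end AccessibilityModules

theorem singular_set_lt_is_algebraic_general {n m : ℕ}
    (f : Fin n → MvPolynomial (Fin n) ℝ) (g : Fin m → Fin n → MvPolynomial (Fin n) ℝ)
    (l : ℕ) :
    (∃ J : Ideal (MvPolynomial (Fin n) ℝ), singularSetInfLt f g l = zeroSet J) ∧
    ∀ k : ℕ, accModule f g k = accModule f g (k + 1) →
      singularSetInfLt f g l = singularSetLt f g k l ∧
      singularSetInfLt f g l = zeroSet (minorIdeal f g k l) := by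
  have of_stable (k : ℕ) (hk : accModule f g k = accModule f g (k + 1)) :
      singularSetInfLt f g l = singularSetLt f g k l ∧
        singularSetInfLt f g l = zeroSet (minorIdeal f g k l) :=
    have h := singularSetInfLt_eq_singularSetLt_of_eq_succ f g hk l
    ⟨h, h.trans (singularSetLt_eq_zeroSet_minorIdeal f g k l)⟩
  obtain ⟨k, hk⟩ := exists_accModule_eq_succ f g
  exact ⟨⟨_, (of_stable k hk).2⟩, of_stable⟩

/-- For `1 ≤ l ≤ n`, the set `S_∞^{<l}` is algebraic; more precisely,
for any `k` with `C^{#k} = C^{#k+1}`, `S_∞^{<l} = S_k^{<l}` and `S_∞^{<l} = 𝕍(J)` where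
`J` is the ideal generated by all `l×l` minors of the matrix with columns in `𝒞^k`. -/
theorem singular_set_lt_is_algebraic {n m : ℕ}
    (f : Fin n → MvPolynomial (Fin n) ℝ) (g : Fin m → Fin n → MvPolynomial (Fin n) ℝ)
    (l : ℕ) (hl : 1 ≤ l) (hln : l ≤ n) :
    (∃ J : Ideal (MvPolynomial (Fin n) ℝ), singularSetInfLt f g l = zeroSet J) ∧
    ∀ k : ℕ, accModule f g k = accModule f g (k + 1) →
      singularSetInfLt f g l = singularSetLt f g k l ∧
      singularSetInfLt f g l = zeroSet (minorIdeal f g k l) :=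
  singular_set_lt_is_algebraic_general f g l
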